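/- arXiv:1605.05583 — 4 statements merged into one kernel-verified Lean document; each statement's English description precedes it below -/
import Mathlib

section
/- Let H, h : [0,R] → ℝ be continuous functions, twice differentiable on (0,R), with H ≥ 0, H(0) − h(0) ≤ 0, H(R) − h(R) ≤ 0, and suppose (H − h)''(r) + (1/r)(H − h)'(r) − (1/r²)(H − h)(r) ≥ 0 on (0,R). Then H(r) ≤ h(r) for all r ∈ [0,R]. -/
/-!
At an interior maximum `x₀` of `u` we have `u'(x₀) = 0` and `u''(x₀) ≤ 0`, so `L u ≥ 0` forces
`q(x₀) u(x₀) ≥ 0`; as `q < 0`, the maximum is nonpositive unless it sits at an endpoint, where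
`u ≤ 0` by hypothesis. For `L u = u'' + u'/r - u/r²` the zeroth-order coefficient is `-1/r² < 0`.
-/

open Set Filter Topology

/-- No differentiability is needed: where `f` or `deriv f` fails to be differentiable, `deriv`
returns `0`. -/
theorem IsLocalMax.deriv_deriv_nonpos {f : ℝ → ℝ} {x₀ : ℝ} (hmax : IsLocalMax f x₀)
    (hc : ContinuousAt f x₀) : deriv (deriv f) x₀ ≤ 0 := by
  by_contra! hpos
  -- `f` would also have a local minimum at `x₀`, hence be locally constant there.
  have hmin : IsLocalMin f x₀ := isLocalMin_of_deriv_deriv_pos hpos hmax.deriv_eq_zero hc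
  have hconst : f =ᶠ[𝓝 x₀] fun _ => f x₀ := by
    filter_upwards [hmax, hmin] with y hle hge using le_antisymm hle hge
  have hderiv : deriv f =ᶠ[𝓝 x₀] fun _ => 0 := by
    simpa only [deriv_const'] using hconst.deriv
  simp [hderiv.deriv_eq] at hpos

theorem nonpos_of_deriv_deriv_add_mul_deriv_add_mul_nonneg {u p q : ℝ → ℝ} {a b : ℝ}
    (hu : ContinuousOn u (Icc a b)) (hq : ∀ x ∈ Ioo a b, q x < 0)
    (hL : ∀ x ∈ Ioo a b, 0 ≤ deriv (deriv u) x + p x * deriv u x + q x * u x)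
    (ha : u a ≤ 0) (hb : u b ≤ 0) :
    ∀ x ∈ Icc a b, u x ≤ 0 := by
  intro x hx
  obtain ⟨x₀, hx₀, hmax⟩ := isCompact_Icc.exists_isMaxOn ⟨x, hx⟩ hu
  suffices u x₀ ≤ 0 from (hmax hx).trans this
  by_contra! hpos
  have hx₀a : a < x₀ := hx₀.1.lt_of_ne (by rintro rfl; linarith)
  have hx₀b : x₀ < b := hx₀.2.lt_of_ne (by rintro rfl; linarith)
  have hnhds : Icc a b ∈ 𝓝 x₀ := Icc_mem_nhds hx₀a hx₀b
  have hloc : IsLocalMax u x₀ := hmax.isLocalMax hnhds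
  have hu'' := hloc.deriv_deriv_nonpos (hu.continuousAt hnhds)
  have hLx₀ := hL x₀ ⟨hx₀a, hx₀b⟩
  rw [hloc.deriv_eq_zero, mul_zero, add_zero] at hLx₀
  nlinarith [hq x₀ ⟨hx₀a, hx₀b⟩]

theorem maximum_principle_euler_operator_general
    (R : ℝ) (H h : ℝ → ℝ)
    (hHc : ContinuousOn H (Icc 0 R)) (hhc : ContinuousOn h (Icc 0 R))
    (h0 : H 0 - h 0 ≤ 0) (hRend : H R - h R ≤ 0)
    (hsub : ∀ r ∈ Ioo 0 R,
      0 ≤ deriv (deriv (fun t => H t - h t)) r + r⁻¹ * deriv (fun t => H t - h t) r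
          - (r^2)⁻¹ * (H r - h r)) :
    ∀ r ∈ Icc 0 R, H r ≤ h r := by
  have hq : ∀ r ∈ Ioo (0 : ℝ) R, -(r ^ 2)⁻¹ < 0 := fun r hr =>
    neg_neg_of_pos (inv_pos.2 (pow_pos hr.1 2))
  have hL : ∀ r ∈ Ioo 0 R, 0 ≤ deriv (deriv (fun t => H t - h t)) r
      + r⁻¹ * deriv (fun t => H t - h t) r + -(r ^ 2)⁻¹ * (H r - h r) := fun r hr => by
    simpa only [neg_mul, ← sub_eq_add_neg] using hsub r hr
  intro r hr
  exact sub_nonpos.1 <|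
    nonpos_of_deriv_deriv_add_mul_deriv_add_mul_nonneg (hHc.sub hhc) hq hL h0 hRend r hr

/-- maximum principle for the operator `L u = u'' + u'/r - u/r²` on `[0,R]`:
a subsolution `H - h` which is nonpositive at the endpoints is nonpositive throughout. -/
theorem maximum_principle_euler_operator
    (R : ℝ) (hR : 0 < R) (H h : ℝ → ℝ)
    (hHc : ContinuousOn H (Icc 0 R)) (hhc : ContinuousOn h (Icc 0 R))
    (hHd : ∀ r ∈ Ioo 0 R, DifferentiableAt ℝ H r ∧ DifferentiableAt ℝ (deriv H) r)
    (hhd : ∀ r ∈ Ioo 0 R, DifferentiableAt ℝ h r ∧ DifferentiableAt ℝ (deriv h) r)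
    (hHnn : ∀ r ∈ Icc 0 R, 0 ≤ H r)
    (h0 : H 0 - h 0 ≤ 0) (hRend : H R - h R ≤ 0)
    (hsub : ∀ r ∈ Ioo 0 R,
      0 ≤ deriv (deriv (fun t => H t - h t)) r + r⁻¹ * deriv (fun t => H t - h t) r
          - (r^2)⁻¹ * (H r - h r)) :
    ∀ r ∈ Icc 0 R, H r ≤ h r :=
  maximum_principle_euler_operator_general R H h hHc hhc h0 hRend hsub
end

section
/- There exist dimensional constants η(n) > 0 and C(n) > 0 such that for any Riemannian n-manifold, the improved Kato inequality |∇|Rm||² ≤ (1 − η(n))|∇Rm|² + C(n)|∇Ric|² holds pointwise. -/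
/-!
Put `a_p = ⟨∇_p Rm, Rm⟩`. For the unit vector `v = a / |a|`, Cauchy–Schwarz gives
`|a|² = ⟨∇_v Rm, Rm⟩² ≤ |∇_v Rm|² |Rm|²`, so it suffices to show that `∇_v Rm` carries at most the
fraction `K / (K + 1)` of `|∇Rm|²`, up to a multiple of `|∇Ric|²`.

Work in an orthonormal frame with `e_z = v`. By the second Bianchi identity, a component
`R_{ijkl,z}` with `k, l ≠ z` is a sum of two components `R_{ijab,p}` with `p ≠ z`; by pair
symmetry the same holds when `i, j ≠ z`. Up to antisymmetry, the only other components are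
`R_{zjzl,z}`, and tracing gives `R_{zjzl,z} = ∑_{a ≠ z} R_{ajla,z} - Ric_{jl,z}`, where every term
of the sum is of the first kind. Summing the squares gives
`|∇_z Rm|² ≤ K (|∇Rm|² - |∇_z Rm|² + |∇Ric|²)` with `K = m⁴ (8 m² + 4)` in dimension `m`.
-/

open Finset Matrix

section SumFunFin

variable {ι M : Type*} [Fintype ι] [AddCommMonoid M]

theorem sum_fun_fin_succ {n : ℕ} (f : (Fin (n + 1) → ι) → M) :
    ∑ x, f x = ∑ a, ∑ x : Fin n → ι, f (vecCons a x) := by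
  rw [← (Fin.consEquiv fun _ => ι).sum_comp, Fintype.sum_prod_type]
  rfl

theorem sum_fun_fin_zero (f : (Fin 0 → ι) → M) : ∑ x, f x = f ![] := by
  rw [Fintype.sum_unique, Subsingleton.elim default ![]]

end SumFunFin

namespace Matrix

variable {κ ι R : Type*} [Fintype κ]

def tensorPow (κ : Type*) [Fintype κ] [CommSemiring R] (Q : Matrix ι ι R) :
    Matrix (κ → ι) (κ → ι) R :=
  of fun x y => ∏ t, Q (x t) (y t)

theorem tensorPow_apply [CommSemiring R] (Q : Matrix ι ι R) (x y : κ → ι) :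
    tensorPow κ Q x y = ∏ t, Q (x t) (y t) := rfl

theorem tensorPow_mul [DecidableEq κ] [Fintype ι] [CommSemiring R] (A B : Matrix ι ι R) :
    tensorPow κ (A * B) = tensorPow κ A * tensorPow κ B := by
  ext x z
  simp only [tensorPow_apply, mul_apply, prod_univ_sum, ← prod_mul_distrib]
  rfl

theorem tensorPow_one [DecidableEq ι] [CommSemiring R] :
    tensorPow κ (1 : Matrix ι ι R) = 1 := by
  ext x y
  simp only [tensorPow_apply, one_apply, prod_boole, mem_univ, true_implies, funext_iff]

theorem tensorPow_transpose [CommSemiring R] (A : Matrix ι ι R) :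
    tensorPow κ Aᵀ = (tensorPow κ A)ᵀ := rfl

theorem tensorPow_mem_orthogonalGroup [DecidableEq κ] [Fintype ι] [DecidableEq ι] [CommRing R]
    {Q : Matrix ι ι R} (hQ : Q ∈ orthogonalGroup ι R) :
    tensorPow κ Q ∈ orthogonalGroup (κ → ι) R := by
  rw [mem_orthogonalGroup_iff'] at hQ ⊢
  rw [← tensorPow_transpose, ← tensorPow_mul, hQ, tensorPow_one]

theorem tensorPow_mulVec_comp [DecidableEq κ] [Fintype ι] [CommSemiring R] (Q : Matrix ι ι R)
    (σ : Equiv.Perm κ) (T : (κ → ι) → R) (x : κ → ι) :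
    (tensorPow κ Q *ᵥ T) (x ∘ σ) = (tensorPow κ Q *ᵥ fun y => T (y ∘ σ)) x := by
  simp only [mulVec, dotProduct, tensorPow_apply]
  refine Fintype.sum_equiv (σ.arrowCongr (Equiv.refl ι)) _ _ fun y => ?_
  rw [← Equiv.prod_comp σ (fun t => Q (x t) (σ.arrowCongr (Equiv.refl ι) y t))]
  simp [Function.comp_def]

theorem tensorPow_mulVec_comp_eq_mul [DecidableEq κ] [Fintype ι] [CommSemiring R]
    (Q : Matrix ι ι R) (σ : Equiv.Perm κ) (c : R) {T : (κ → ι) → R}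
    (hT : ∀ y, T (y ∘ σ) = c * T y) (x : κ → ι) :
    (tensorPow κ Q *ᵥ T) (x ∘ σ) = c * (tensorPow κ Q *ᵥ T) x := by
  rw [tensorPow_mulVec_comp, show (fun y => T (y ∘ σ)) = c • T from funext hT, mulVec_smul]
  rfl

theorem tensorPow_mulVec_add_comp_add_comp_eq_zero [DecidableEq κ] [Fintype ι] [CommSemiring R]
    (Q : Matrix ι ι R) (σ τ : Equiv.Perm κ) {T : (κ → ι) → R}
    (hT : ∀ y, T y + T (y ∘ σ) + T (y ∘ τ) = 0) (x : κ → ι) :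
    (tensorPow κ Q *ᵥ T) x + (tensorPow κ Q *ᵥ T) (x ∘ σ) + (tensorPow κ Q *ᵥ T) (x ∘ τ) = 0 := by
  rw [tensorPow_mulVec_comp, tensorPow_mulVec_comp, ← Pi.add_apply, ← Pi.add_apply, ← mulVec_add,
    ← mulVec_add, show T + (fun y => T (y ∘ σ)) + (fun y => T (y ∘ τ)) = 0 from funext hT,
    mulVec_zero, Pi.zero_apply]

theorem tensorPow_fin_zero_mulVec [Fintype ι] [CommSemiring R] (Q : Matrix ι ι R)
    (T : (Fin 0 → ι) → R) (x : Fin 0 → ι) : (tensorPow (Fin 0) Q *ᵥ T) x = T x := by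
  simp [mulVec, dotProduct, tensorPow_apply, Subsingleton.elim x default]

theorem tensorPow_fin_succ_mulVec_cons [Fintype ι] [CommSemiring R] {n : ℕ} (Q : Matrix ι ι R)
    (T : (Fin (n + 1) → ι) → R) (i : ι) (x : Fin n → ι) :
    (tensorPow (Fin (n + 1)) Q *ᵥ T) (vecCons i x) =
      ∑ a, Q i a * (tensorPow (Fin n) Q *ᵥ fun y => T (vecCons a y)) x := by
  simp only [mulVec, dotProduct, tensorPow_apply, sum_fun_fin_succ, Fin.prod_univ_succ,
    cons_val_zero, cons_val_succ, mul_sum, mul_assoc]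

theorem dotProduct_mulVec_mulVec_of_mem_orthogonalGroup {n : Type*} [Fintype n] [DecidableEq n]
    [CommRing R] {A : Matrix n n R} (hA : A ∈ orthogonalGroup n R) (x y : n → R) :
    (A *ᵥ x) ⬝ᵥ (A *ᵥ y) = x ⬝ᵥ y := by
  rw [mem_orthogonalGroup_iff'] at hA
  rw [dotProduct_mulVec, ← vecMul_transpose, vecMul_vecMul, hA, vecMul_one]

theorem sum_sq_mulVec_of_mem_orthogonalGroup {n : Type*} [Fintype n] [DecidableEq n] [CommRing R]
    {A : Matrix n n R} (hA : A ∈ orthogonalGroup n R) (x : n → R) :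
    ∑ i, (A *ᵥ x) i ^ 2 = ∑ i, x i ^ 2 := by
  simpa [dotProduct, sq] using dotProduct_mulVec_mulVec_of_mem_orthogonalGroup hA x x

theorem sum_sum_mul_sum_mul_of_mem_orthogonalGroup [Fintype ι] [DecidableEq ι] [CommRing R]
    {Q : Matrix ι ι R} (hQ : Q ∈ orthogonalGroup ι R) (F : ι → ι → R) :
    ∑ a, ∑ b, Q a b * ∑ c, Q a c * F b c = ∑ b, F b b := by
  rw [mem_orthogonalGroup_iff'] at hQ
  have hcol (b c : ι) : ∑ a, Q a b * Q a c = if b = c then 1 else 0 := by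
    rw [← one_apply, ← hQ, mul_apply]
    rfl
  simp_rw [mul_sum, ← mul_assoc]
  rw [sum_comm]
  refine sum_congr rfl fun b _ => ?_
  rw [sum_comm]
  simp [← sum_mul, hcol]

end Matrix

theorem exists_mem_orthogonalGroup_row_eq {ι : Type*} [Fintype ι] [DecidableEq ι] {v : ι → ℝ}
    (hv : ∑ i, v i ^ 2 = 1) (z : ι) : ∃ Q ∈ orthogonalGroup ι ℝ, Q z = v := by
  have hw : Orthonormal ℝ (({z} : Set ι).domRestrict fun _ => WithLp.toLp 2 v) := by
    rw [orthonormal_iff_ite]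
    rintro ⟨i, rfl⟩ ⟨j, rfl⟩
    simp [EuclideanSpace.norm_eq, hv]
  obtain ⟨b, hb⟩ := hw.exists_orthonormalBasis_extension_of_card_eq (by simp)
  refine ⟨of fun i a => b i a, ?_, funext fun a => by simp [hb z rfl]⟩
  rw [mem_orthogonalGroup_iff]
  ext i j
  simpa [mul_apply, EuclideanSpace.inner_eq_star_dotProduct, dotProduct, one_apply, eq_comm] using
    orthonormal_iff_ite.mp b.orthonormal j i

theorem sum_sq_le_of_forall_unit {ι : Type*} [Fintype ι] {a : ι → ℝ} {B : ℝ} (hB : 0 ≤ B)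
    (h : ∀ v : ι → ℝ, ∑ i, v i ^ 2 = 1 → (∑ i, v i * a i) ^ 2 ≤ B) : ∑ i, a i ^ 2 ≤ B := by
  rcases (sum_nonneg fun i _ => sq_nonneg (a i)).eq_or_lt with h0 | hpos
  · rw [← h0]; exact hB
  set r := √(∑ i, a i ^ 2)
  have hr2 : r ^ 2 = ∑ i, a i ^ 2 := Real.sq_sqrt hpos.le
  have hv : ∑ i, (a i / r) ^ 2 = 1 := by
    simp only [div_pow, ← sum_div, hr2]
    exact div_self hpos.ne'
  have hva : ∑ i, a i / r * a i = r := by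
    simp only [div_mul_eq_mul_div, ← sq, ← sum_div, ← hr2]
    field_simp
  simpa [hva, hr2] using h _ hv

theorem sq_sum_mul_sum_le {ι : Type*} [Fintype ι] (v : ι → ℝ) (D : ι → ι → ι → ι → ι → ℝ)
    (R : ι → ι → ι → ι → ℝ) :
    (∑ p, v p * ∑ i, ∑ j, ∑ k, ∑ l, D i j k l p * R i j k l) ^ 2 ≤
      (∑ i, ∑ j, ∑ k, ∑ l, (∑ p, v p * D i j k l p) ^ 2) * ∑ i, ∑ j, ∑ k, ∑ l, R i j k l ^ 2 := by
  have hswap : ∑ p, v p * ∑ i, ∑ j, ∑ k, ∑ l, D i j k l p * R i j k l =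
      ∑ i, ∑ j, ∑ k, ∑ l, (∑ p, v p * D i j k l p) * R i j k l := by
    simp only [mul_sum, sum_mul, mul_assoc]
    rw [sum_comm]; refine sum_congr rfl fun i _ => ?_
    rw [sum_comm]; refine sum_congr rfl fun j _ => ?_
    rw [sum_comm]; refine sum_congr rfl fun k _ => ?_
    rw [sum_comm]
  have h := sum_mul_sq_le_sq_mul_sq univ
    (fun x : ι × ι × ι × ι => ∑ p, v p * D x.1 x.2.1 x.2.2.1 x.2.2.2 p)
    (fun x => R x.1 x.2.1 x.2.2.1 x.2.2.2)
  simp only [Fintype.sum_prod_type] at h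
  rwa [hswap]

section ChangeFrame

variable {ι : Type*} [Fintype ι]

def uncurry₅ (D : ι → ι → ι → ι → ι → ℝ) (y : Fin 5 → ι) : ℝ :=
  D (y 0) (y 1) (y 2) (y 3) (y 4)

def uncurry₃ (T : ι → ι → ι → ℝ) (y : Fin 3 → ι) : ℝ := T (y 0) (y 1) (y 2)

/-- Components in the orthonormal frame whose `i`-th vector is the row `Q i`. -/
def changeFrame₅ (Q : Matrix ι ι ℝ) (D : ι → ι → ι → ι → ι → ℝ) (i j k l p : ι) : ℝ :=
  (tensorPow (Fin 5) Q *ᵥ uncurry₅ D) ![i, j, k, l, p]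

def changeFrame₃ (Q : Matrix ι ι ℝ) (T : ι → ι → ι → ℝ) (i j p : ι) : ℝ :=
  (tensorPow (Fin 3) Q *ᵥ uncurry₃ T) ![i, j, p]

variable {Q : Matrix ι ι ℝ} {D : ι → ι → ι → ι → ι → ℝ}

theorem changeFrame₅_antisymm_left (hD : ∀ i j k l p, D i j k l p = -D j i k l p)
    (i j k l p : ι) : changeFrame₅ Q D i j k l p = -changeFrame₅ Q D j i k l p := by
  have h := tensorPow_mulVec_comp_eq_mul Q (Equiv.swap 0 1) (-1) (T := uncurry₅ D)
    (fun y => by simp [uncurry₅, Equiv.swap_apply_def, hD (y 1)]) ![i, j, k, l, p]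
  rw [changeFrame₅, changeFrame₅, show ![j, i, k, l, p] = ![i, j, k, l, p] ∘ Equiv.swap 0 1 by
    funext t; fin_cases t <;> rfl, h]
  ring

theorem changeFrame₅_antisymm_right (hD : ∀ i j k l p, D i j k l p = -D i j l k p)
    (i j k l p : ι) : changeFrame₅ Q D i j k l p = -changeFrame₅ Q D i j l k p := by
  have h := tensorPow_mulVec_comp_eq_mul Q (Equiv.swap 2 3) (-1) (T := uncurry₅ D)
    (fun y => by simp [uncurry₅, Equiv.swap_apply_def, hD _ _ (y 3)]) ![i, j, k, l, p]
  rw [changeFrame₅, changeFrame₅, show ![i, j, l, k, p] = ![i, j, k, l, p] ∘ Equiv.swap 2 3 by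
    funext t; fin_cases t <;> rfl, h]
  ring

theorem changeFrame₅_symm_pair (hD : ∀ i j k l p, D i j k l p = D k l i j p) (i j k l p : ι) :
    changeFrame₅ Q D i j k l p = changeFrame₅ Q D k l i j p := by
  let σ : Equiv.Perm (Fin 5) := Equiv.swap 0 2 * Equiv.swap 1 3
  have h := tensorPow_mulVec_comp_eq_mul Q σ 1 (T := uncurry₅ D)
    (fun y => by simp [σ, uncurry₅, Equiv.swap_apply_def, hD (y 2)]) ![i, j, k, l, p]
  rw [changeFrame₅, changeFrame₅, show ![k, l, i, j, p] = ![i, j, k, l, p] ∘ σ by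
    funext t; fin_cases t <;> rfl, h]
  ring

theorem changeFrame₅_bianchi (hD : ∀ i j k l p, D i j k l p + D i j l p k + D i j p k l = 0)
    (i j k l p : ι) :
    changeFrame₅ Q D i j k l p + changeFrame₅ Q D i j l p k + changeFrame₅ Q D i j p k l = 0 := by
  let σ : Equiv.Perm (Fin 5) := Equiv.swap 2 3 * Equiv.swap 3 4
  let τ : Equiv.Perm (Fin 5) := Equiv.swap 2 4 * Equiv.swap 3 4
  have h := tensorPow_mulVec_add_comp_add_comp_eq_zero Q σ τ (T := uncurry₅ D)
    (fun y => by
      simpa [σ, τ, uncurry₅, Equiv.swap_apply_def] using hD (y 0) (y 1) (y 2) (y 3) (y 4))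
    ![i, j, k, l, p]
  rwa [changeFrame₅, changeFrame₅, changeFrame₅,
    show ![i, j, l, p, k] = ![i, j, k, l, p] ∘ σ by funext t; fin_cases t <;> rfl,
    show ![i, j, p, k, l] = ![i, j, k, l, p] ∘ τ by funext t; fin_cases t <;> rfl]

theorem sum_changeFrame₅_contract [DecidableEq ι] (hQ : Q ∈ orthogonalGroup ι ℝ)
    {Ric : ι → ι → ι → ℝ} (hRic : ∀ i j p, Ric i j p = ∑ a, D a i j a p) (i j p : ι) :
    ∑ a, changeFrame₅ Q D a i j a p = changeFrame₃ Q Ric i j p := by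
  let σ : Equiv.Perm (Fin 5) := Equiv.swap 1 2 * Equiv.swap 2 3
  have hvec (a : ι) : ![a, i, j, a, p] = ![a, a, i, j, p] ∘ σ := by
    funext t; fin_cases t <;> rfl
  simp only [changeFrame₅, hvec, tensorPow_mulVec_comp, tensorPow_fin_succ_mulVec_cons (n := 4),
    tensorPow_fin_succ_mulVec_cons (n := 3)]
  rw [sum_sum_mul_sum_mul_of_mem_orthogonalGroup hQ, ← Finset.sum_apply, ← mulVec_sum]
  congr 2
  funext y
  simp [σ, uncurry₅, uncurry₃, hRic, Equiv.swap_apply_def]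

theorem sum_sq_changeFrame₅ [DecidableEq ι] (hQ : Q ∈ orthogonalGroup ι ℝ) :
    ∑ i, ∑ j, ∑ k, ∑ l, ∑ p, changeFrame₅ Q D i j k l p ^ 2 =
      ∑ i, ∑ j, ∑ k, ∑ l, ∑ p, D i j k l p ^ 2 := by
  have h := sum_sq_mulVec_of_mem_orthogonalGroup (tensorPow_mem_orthogonalGroup (κ := Fin 5) hQ)
    (uncurry₅ D)
  simp only [sum_fun_fin_succ, sum_fun_fin_zero] at h
  exact h

theorem sum_sq_changeFrame₃ [DecidableEq ι] (hQ : Q ∈ orthogonalGroup ι ℝ) (T : ι → ι → ι → ℝ) :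
    ∑ i, ∑ j, ∑ p, changeFrame₃ Q T i j p ^ 2 = ∑ i, ∑ j, ∑ p, T i j p ^ 2 := by
  have h := sum_sq_mulVec_of_mem_orthogonalGroup (tensorPow_mem_orthogonalGroup (κ := Fin 3) hQ)
    (uncurry₃ T)
  simp only [sum_fun_fin_succ, sum_fun_fin_zero] at h
  exact h

theorem sum_sq_changeFrame₅_last [DecidableEq ι] (hQ : Q ∈ orthogonalGroup ι ℝ) (z : ι) :
    ∑ i, ∑ j, ∑ k, ∑ l, changeFrame₅ Q D i j k l z ^ 2 =
      ∑ i, ∑ j, ∑ k, ∑ l, (∑ p, Q z p * D i j k l p) ^ 2 := by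
  have h := sum_sq_mulVec_of_mem_orthogonalGroup (tensorPow_mem_orthogonalGroup (κ := Fin 4) hQ)
    (fun y => ∑ p, Q z p * D (y 0) (y 1) (y 2) (y 3) p)
  simp only [sum_fun_fin_succ, sum_fun_fin_zero] at h
  simpa [changeFrame₅, uncurry₅, tensorPow_fin_succ_mulVec_cons, tensorPow_fin_zero_mulVec] using h

end ChangeFrame

def katoConst (m : ℕ) : ℝ := m ^ 4 * (8 * m ^ 2 + 4)

section FrameBound

variable {ι : Type*} [Fintype ι] [DecidableEq ι]

def transverseNormSq (D : ι → ι → ι → ι → ι → ℝ) (z : ι) : ℝ :=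
  ∑ i, ∑ j, ∑ k, ∑ l, ∑ p ∈ univ.erase z, D i j k l p ^ 2

variable {D : ι → ι → ι → ι → ι → ℝ} {z : ι}

theorem sum_sq_eq_add_transverseNormSq (D : ι → ι → ι → ι → ι → ℝ) (z : ι) :
    ∑ i, ∑ j, ∑ k, ∑ l, ∑ p, D i j k l p ^ 2 =
      ∑ i, ∑ j, ∑ k, ∑ l, D i j k l z ^ 2 + transverseNormSq D z := by
  simp only [transverseNormSq, ← sum_add_distrib]
  refine sum_congr rfl fun i _ => sum_congr rfl fun j _ => sum_congr rfl fun k _ =>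
    sum_congr rfl fun l _ => (add_sum_erase _ _ (mem_univ z)).symm

theorem sq_le_transverseNormSq {q : ι} (hq : q ≠ z) (i j k l : ι) :
    D i j k l q ^ 2 ≤ transverseNormSq D z := by
  have hterm : D i j k l q ^ 2 ≤ ∑ p ∈ univ.erase z, D i j k l p ^ 2 :=
    single_le_sum (fun _ _ => sq_nonneg _) (mem_erase.mpr ⟨hq, mem_univ q⟩)
  refine hterm.trans ?_
  have := single_le_sum (s := univ) (fun _ _ => by positivity) (mem_univ (i, j, k, l))
    (f := fun x : ι × ι × ι × ι => ∑ p ∈ univ.erase z, D x.1 x.2.1 x.2.2.1 x.2.2.2 p ^ 2)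
  simp only [Fintype.sum_prod_type] at this
  exact this

theorem sq_le_four_transverseNormSq (hB : ∀ i j k l p, D i j k l p + D i j l p k + D i j p k l = 0)
    {i j k l : ι} (hk : k ≠ z) (hl : l ≠ z) : D i j k l z ^ 2 ≤ 4 * transverseNormSq D z := by
  have h₁ := sq_le_transverseNormSq (D := D) hk i j l z
  have h₂ := sq_le_transverseNormSq (D := D) hl i j z k
  rw [show D i j k l z = -(D i j l z k + D i j z k l) by linarith [hB i j k l z]]
  nlinarith [sq_nonneg (D i j l z k - D i j z k l)]

theorem sq_le_of_contract (hD : ∀ i j k l p, D i j k l p = -D i j l k p)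
    (hB : ∀ i j k l p, D i j k l p + D i j l p k + D i j p k l = 0) {Ric : ι → ι → ι → ℝ}
    (hRic : ∀ i j p, Ric i j p = ∑ a, D a i j a p) {j l : ι} (hl : l ≠ z) :
    D z j z l z ^ 2 ≤ 8 * Fintype.card ι ^ 2 * transverseNormSq D z + 2 * Ric j l z ^ 2 := by
  set s := univ.erase z
  set T := transverseNormSq D z
  have hs : (#s : ℝ) ≤ Fintype.card ι := by exact_mod_cast card_le_univ s
  have hT : 0 ≤ T := by unfold T transverseNormSq; positivity
  have hsplit : D z j z l z = ∑ a ∈ s, D a j l a z - Ric j l z := by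
    rw [hRic, ← add_sum_erase _ _ (mem_univ z), hD z j l z z]
    ring
  have hterms : ∑ a ∈ s, D a j l a z ^ 2 ≤ #s * (4 * T) := by
    simpa using sum_le_card_nsmul s _ _ fun a ha =>
      sq_le_four_transverseNormSq hB hl (ne_of_mem_erase ha)
  have hcs := sq_sum_le_card_mul_sum_sq (s := s) (f := fun a => D a j l a z)
  rw [hsplit]
  nlinarith [sq_nonneg (∑ a ∈ s, D a j l a z + Ric j l z),
    mul_le_mul_of_nonneg_left hterms (Nat.cast_nonneg #s),
    mul_le_mul hs hs (Nat.cast_nonneg _) (by positivity : (0 : ℝ) ≤ Fintype.card ι)]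

theorem sq_le_mul_transverseNormSq_add (hD1 : ∀ i j k l p, D i j k l p = -D j i k l p)
    (hD2 : ∀ i j k l p, D i j k l p = -D i j l k p) (hD3 : ∀ i j k l p, D i j k l p = D k l i j p)
    (hB : ∀ i j k l p, D i j k l p + D i j l p k + D i j p k l = 0) {Ric : ι → ι → ι → ℝ}
    (hRic : ∀ i j p, Ric i j p = ∑ a, D a i j a p) (i j k l : ι) :
    D i j k l z ^ 2 ≤
      (8 * Fintype.card ι ^ 2 + 4) * (transverseNormSq D z + ∑ j, ∑ l, Ric j l z ^ 2) := by
  set B := (8 * Fintype.card ι ^ 2 + 4 : ℝ) * (transverseNormSq D z + ∑ j, ∑ l, Ric j l z ^ 2)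
  have hT : 0 ≤ transverseNormSq D z := by unfold transverseNormSq; positivity
  have hE : 0 ≤ ∑ j, ∑ l, Ric j l z ^ 2 := by positivity
  have hm : (0 : ℝ) ≤ Fintype.card ι ^ 2 := by positivity
  have hB0 : 0 ≤ B := by positivity
  have hB4 : 4 * transverseNormSq D z ≤ B := by simp only [B]; nlinarith
  have hgood {i j k l : ι} (hk : k ≠ z) (hl : l ≠ z) : D i j k l z ^ 2 ≤ B :=
    (sq_le_four_transverseNormSq hB hk hl).trans hB4
  have hcore (j l : ι) : D z j z l z ^ 2 ≤ B := by
    rcases eq_or_ne l z with rfl | hl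
    · rw [show D l j l l l = 0 by linarith [hD2 l j l l l]]
      simpa using hB0
    have hRic_le : Ric j l z ^ 2 ≤ ∑ j, ∑ l, Ric j l z ^ 2 := by
      have := single_le_sum (s := univ) (fun _ _ => by positivity) (mem_univ (j, l))
        (f := fun x : ι × ι => Ric x.1 x.2 z ^ 2)
      simpa only [Fintype.sum_prod_type] using this
    refine (sq_le_of_contract hD2 hB hRic hl).trans ?_
    simp only [B]
    nlinarith
  by_cases hkl : k ≠ z ∧ l ≠ z
  · exact hgood hkl.1 hkl.2
  by_cases hij : i ≠ z ∧ j ≠ z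
  · rw [hD3]; exact hgood hij.1 hij.2
  simp only [not_and, not_not] at hkl hij
  rcases eq_or_ne i z with rfl | hi
  · rcases eq_or_ne k i with rfl | hk
    · exact hcore j l
    · rw [hkl hk, hD2 i j k i i, neg_sq]; exact hcore j k
  · rw [hij hi, hD1 i z k l z, neg_sq]
    rcases eq_or_ne k z with rfl | hk
    · exact hcore i l
    · rw [hkl hk, hD2 z i k z z, neg_sq]; exact hcore i k

theorem sum_sq_le_katoConst_mul (hD1 : ∀ i j k l p, D i j k l p = -D j i k l p)
    (hD2 : ∀ i j k l p, D i j k l p = -D i j l k p) (hD3 : ∀ i j k l p, D i j k l p = D k l i j p)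
    (hB : ∀ i j k l p, D i j k l p + D i j l p k + D i j p k l = 0) {Ric : ι → ι → ι → ℝ}
    (hRic : ∀ i j p, Ric i j p = ∑ a, D a i j a p) (z : ι) :
    ∑ i, ∑ j, ∑ k, ∑ l, D i j k l z ^ 2 ≤
      katoConst (Fintype.card ι) * (transverseNormSq D z + ∑ j, ∑ l, Ric j l z ^ 2) := by
  calc ∑ i, ∑ j, ∑ k, ∑ l, D i j k l z ^ 2
      ≤ ∑ _i : ι, ∑ _j : ι, ∑ _k : ι, ∑ _l : ι,
          (8 * Fintype.card ι ^ 2 + 4) * (transverseNormSq D z + ∑ j, ∑ l, Ric j l z ^ 2) := by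
        gcongr with i _ j _ k _ l _
        exact sq_le_mul_transverseNormSq_add hD1 hD2 hD3 hB hRic i j k l
    _ = _ := by simp only [sum_const, card_univ, nsmul_eq_mul, katoConst]; ring

theorem katoConst_add_one_mul_sum_sq_le (hD1 : ∀ i j k l p, D i j k l p = -D j i k l p)
    (hD2 : ∀ i j k l p, D i j k l p = -D i j l k p) (hD3 : ∀ i j k l p, D i j k l p = D k l i j p)
    (hB : ∀ i j k l p, D i j k l p + D i j l p k + D i j p k l = 0) {Ric : ι → ι → ι → ℝ}
    (hRic : ∀ i j p, Ric i j p = ∑ a, D a i j a p) {v : ι → ℝ} (hv : ∑ p, v p ^ 2 = 1) :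
    (katoConst (Fintype.card ι) + 1) * ∑ i, ∑ j, ∑ k, ∑ l, (∑ p, v p * D i j k l p) ^ 2 ≤
      katoConst (Fintype.card ι) *
        (∑ i, ∑ j, ∑ k, ∑ l, ∑ p, D i j k l p ^ 2 + ∑ i, ∑ j, ∑ p, Ric i j p ^ 2) := by
  obtain ⟨z⟩ : Nonempty ι := by
    by_contra h
    simp [not_nonempty_iff.mp h] at hv
  obtain ⟨Q, hQ, rfl⟩ := exists_mem_orthogonalGroup_row_eq hv z
  have hframe := sum_sq_le_katoConst_mul (changeFrame₅_antisymm_left hD1)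
    (changeFrame₅_antisymm_right hD2) (changeFrame₅_symm_pair hD3) (changeFrame₅_bianchi hB)
    (fun i j p => (sum_changeFrame₅_contract hQ hRic i j p).symm) z
  have hsplit := sum_sq_eq_add_transverseNormSq (changeFrame₅ Q D) z
  rw [sum_sq_changeFrame₅ hQ, sum_sq_changeFrame₅_last hQ] at hsplit
  rw [sum_sq_changeFrame₅_last hQ] at hframe
  have hRic' : ∑ j, ∑ l, changeFrame₃ Q Ric j l z ^ 2 ≤ ∑ i, ∑ j, ∑ p, Ric i j p ^ 2 := by
    rw [← sum_sq_changeFrame₃ hQ Ric]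
    gcongr with i _ j _
    exact single_le_sum (fun _ _ => sq_nonneg _) (mem_univ z)
  have hK : 0 ≤ katoConst (Fintype.card ι) := by unfold katoConst; positivity
  nlinarith [mul_le_mul_of_nonneg_left hRic' hK]

end FrameBound

/-- improved Kato inequality `|∇|Rm||² ≤ (1 − η(n))|∇Rm|² + C(n)|∇Ric|²`,
stated pointwise in components in a normal frame (multiplied through by `|Rm|²`):
`R i j k l` are the components of `Rm`, `DR i j k l p = R_{ijkl,p}` those of `∇Rm`, and
`DRic i j p = Ric_{ij,p}` those of `∇Ric`; the hypotheses are the curvature symmetries,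
the second Bianchi identity and the contracted relation defining `∇Ric`. -/
theorem improved_kato_inequality :
    ∀ n : ℕ, ∃ η C : ℝ, 0 < η ∧ η < 1 ∧ 0 < C ∧
    ∀ (R : Fin (n+1) → Fin (n+1) → Fin (n+1) → Fin (n+1) → ℝ)
      (DR : Fin (n+1) → Fin (n+1) → Fin (n+1) → Fin (n+1) → Fin (n+1) → ℝ)
      (DRic : Fin (n+1) → Fin (n+1) → Fin (n+1) → ℝ),
      (∀ i j k l, R i j k l = -R j i k l) →
      (∀ i j k l, R i j k l = -R i j l k) →
      (∀ i j k l, R i j k l = R k l i j) →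
      (∀ i j k l p, DR i j k l p = -DR j i k l p) →
      (∀ i j k l p, DR i j k l p = -DR i j l k p) →
      (∀ i j k l p, DR i j k l p = DR k l i j p) →
      -- second Bianchi identity: R_{ijkl,p} + R_{ijlp,k} + R_{ijpk,l} = 0
      (∀ i j k l p, DR i j k l p + DR i j l p k + DR i j p k l = 0) →
      -- contracted second derivative data: Ric_{ij,p} = Σ_a R_{aija,p}
      (∀ i j p, DRic i j p = ∑ a, DR a i j a p) →
      (∑ p, (∑ i, ∑ j, ∑ k, ∑ l, DR i j k l p * R i j k l)^2) ≤
        ((1 - η) * (∑ i, ∑ j, ∑ k, ∑ l, ∑ p, (DR i j k l p)^2)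
            + C * (∑ i, ∑ j, ∑ p, (DRic i j p)^2))
          * (∑ i, ∑ j, ∑ k, ∑ l, (R i j k l)^2) := by
  intro n
  set K := katoConst (n + 1) with hKdef
  have hK : 0 < K := by unfold K katoConst; positivity
  have hη : (K + 1) * (1 - 1 / (K + 1)) = K := by field_simp; ring
  have hη0 : 0 ≤ 1 - 1 / (K + 1) := by nlinarith
  refine ⟨1 / (K + 1), K, by positivity, (div_lt_one (by positivity)).mpr (by linarith), hK, ?_⟩
  intro R DR DRic _ _ _ hD1 hD2 hD3 hB hRic
  apply sum_sq_le_of_forall_unit (by positivity)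
  intro v hv
  have hdir := katoConst_add_one_mul_sum_sq_le hD1 hD2 hD3 hB hRic hv
  rw [Fintype.card_fin, ← hKdef] at hdir
  refine (sq_sum_mul_sum_le v DR R).trans (mul_le_mul_of_nonneg_right ?_ (by positivity))
  refine le_of_mul_le_mul_left ?_ (by positivity : (0 : ℝ) < K + 1)
  rw [mul_add, ← mul_assoc, hη]
  have hE : 0 ≤ ∑ i, ∑ j, ∑ p, DRic i j p ^ 2 := by positivity
  nlinarith [mul_nonneg hK.le (mul_nonneg hK.le hE)]
end

section
/- Fix a direction e₁ in a normal frame at a point of a Riemannian n-manifold and set Ξ = Σ_{ijkl} Σ_{p≥2} (R_{ijkl,p})² + Σ_{ijp} (Ric_{ij,p})². Then there is a dimensional constant C(n) such that Σ_{ijkl} (R_{ijkl,1})² ≤ C(n) Ξ. -/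
open Finset

/-!
Split the components `R_{ijkl,1}` according to how many of `k, l` equal the distinguished
index `1`. If neither does, the second Bianchi identity writes `R_{ijkl,1}` as a sum of two
derivatives in directions other than `e₁`. If exactly one does, the pair symmetries reduce
either to that case or to `R_{1βγ1,1}`, and the trace relation gives
`R_{1βγ1,1} = Ric_{βγ,1} - Σ_{α ≠ 1} R_{αβγα,1}`, where each `R_{αβγα,1}` is again a sum of
two derivatives in directions other than `e₁` by Bianchi. If both do, `R_{ij11,1} = 0`.
Every component is thus bounded pointwise by a dimensional multiple of `Ξ`, and summing
gives the theorem.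
-/

lemma sq_add_le_four_mul {a b M : ℝ} (ha : a ^ 2 ≤ M) (hb : b ^ 2 ≤ M) :
    (a + b) ^ 2 ≤ 4 * M := by
  nlinarith [add_sq_le (a := a) (b := b)]

lemma sq_sum_le_card_sq_mul {ι : Type*} {s : Finset ι} {f : ι → ℝ} {M : ℝ}
    (h : ∀ a ∈ s, f a ^ 2 ≤ M) : (∑ a ∈ s, f a) ^ 2 ≤ (#s : ℝ) ^ 2 * M :=
  calc (∑ a ∈ s, f a) ^ 2 ≤ #s * ∑ a ∈ s, f a ^ 2 := sq_sum_le_card_mul_sum_sq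
    _ ≤ #s * (#s * M) := by
        gcongr
        simpa using sum_le_sum h
    _ = (#s : ℝ) ^ 2 * M := by ring

section CurvatureDerivative

variable {ι : Type*} [Fintype ι] [DecidableEq ι]
  (DR : ι → ι → ι → ι → ι → ℝ) (DRic : ι → ι → ι → ℝ) (o : ι)

/-- The quantity `Ξ`, with the index `o` playing the role of the direction `e₁`. -/
def offDirectionEnergy : ℝ :=
  (∑ i, ∑ j, ∑ k, ∑ l, ∑ p, if p = o then 0 else (DR i j k l p) ^ 2)
    + ∑ i, ∑ j, ∑ p, (DRic i j p) ^ 2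

lemma offDirectionEnergy_nonneg : 0 ≤ offDirectionEnergy DR DRic o := by
  unfold offDirectionEnergy
  positivity

variable {DR o}

lemma sq_le_offDirectionEnergy {i j k l p : ι} (hp : p ≠ o) :
    DR i j k l p ^ 2 ≤ offDirectionEnergy DR DRic o := by
  calc DR i j k l p ^ 2 = if p = o then 0 else DR i j k l p ^ 2 := by rw [if_neg hp]
    _ ≤ ∑ p, if p = o then 0 else DR i j k l p ^ 2 := by
        apply single_le_sum (fun _ _ => by positivity) (mem_univ p)
    _ ≤ ∑ l, ∑ p, if p = o then 0 else DR i j k l p ^ 2 := by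
        apply single_le_sum (fun _ _ => by positivity) (mem_univ l)
    _ ≤ ∑ k, ∑ l, ∑ p, if p = o then 0 else DR i j k l p ^ 2 := by
        apply single_le_sum (fun _ _ => by positivity) (mem_univ k)
    _ ≤ ∑ j, ∑ k, ∑ l, ∑ p, if p = o then 0 else DR i j k l p ^ 2 := by
        apply single_le_sum (fun _ _ => by positivity) (mem_univ j)
    _ ≤ ∑ i, ∑ j, ∑ k, ∑ l, ∑ p, if p = o then 0 else DR i j k l p ^ 2 := by
        apply single_le_sum (fun _ _ => by positivity) (mem_univ i)
    _ ≤ offDirectionEnergy DR DRic o := le_add_of_nonneg_right (by positivity)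

variable (o) {DRic}

lemma sq_ricci_le_offDirectionEnergy (i j p : ι) :
    DRic i j p ^ 2 ≤ offDirectionEnergy DR DRic o := by
  calc DRic i j p ^ 2 ≤ ∑ p, DRic i j p ^ 2 := by
        apply single_le_sum (fun _ _ => by positivity) (mem_univ p)
    _ ≤ ∑ j, ∑ p, DRic i j p ^ 2 := by
        apply single_le_sum (fun _ _ => by positivity) (mem_univ j)
    _ ≤ ∑ i, ∑ j, ∑ p, DRic i j p ^ 2 := by
        apply single_le_sum (fun _ _ => by positivity) (mem_univ i)
    _ ≤ offDirectionEnergy DR DRic o := le_add_of_nonneg_left (by positivity)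

lemma sq_le_four_mul_offDirectionEnergy
    (hbianchi : ∀ i j k l p, DR i j k l p + DR i j l p k + DR i j p k l = 0)
    {i j k l : ι} (hk : k ≠ o) (hl : l ≠ o) :
    DR i j k l o ^ 2 ≤ 4 * offDirectionEnergy DR DRic o := by
  have hsplit : DR i j k l o = -DR i j l o k + -DR i j o k l := by
    linarith [hbianchi i j k l o]
  rw [hsplit]
  exact sq_add_le_four_mul (by rw [neg_sq]; exact sq_le_offDirectionEnergy DRic hk)
    (by rw [neg_sq]; exact sq_le_offDirectionEnergy DRic hl)

lemma first_last_eq_ricci_add_sum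
    (hbianchi : ∀ i j k l p, DR i j k l p + DR i j l p k + DR i j p k l = 0)
    (htrace : ∀ i j p, DRic i j p = ∑ a, DR a i j a p) (β γ : ι) :
    DR o β γ o o = DRic β γ o + ∑ a ∈ univ.erase o, (DR a β a o γ + DR a β o γ a) := by
  have hterm : ∀ a, DR a β γ a o = -(DR a β a o γ + DR a β o γ a) := fun a => by
    linarith [hbianchi a β γ a o]
  rw [htrace, ← add_sum_erase _ _ (mem_univ o), sum_congr rfl fun a _ => hterm a,
    sum_neg_distrib]
  ring

lemma sq_first_last_le
    (hskew : ∀ i j k l p, DR i j k l p = -DR i j l k p)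
    (hbianchi : ∀ i j k l p, DR i j k l p + DR i j l p k + DR i j p k l = 0)
    (htrace : ∀ i j p, DRic i j p = ∑ a, DR a i j a p) (β γ : ι) :
    DR o β γ o o ^ 2 ≤ (8 * (Fintype.card ι : ℝ) ^ 2 + 2) * offDirectionEnergy DR DRic o := by
  have hΞ := offDirectionEnergy_nonneg DR DRic o
  by_cases hγ : γ = o
  · subst hγ
    have hzero : DR γ β γ γ γ = 0 := by linarith [hskew γ β γ γ γ]
    rw [hzero, zero_pow two_ne_zero]
    exact mul_nonneg (by positivity) hΞ
  have hsum : (∑ a ∈ univ.erase o, (DR a β a o γ + DR a β o γ a)) ^ 2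
      ≤ (Fintype.card ι : ℝ) ^ 2 * (4 * offDirectionEnergy DR DRic o) := by
    refine (sq_sum_le_card_sq_mul fun a ha => sq_add_le_four_mul
      (sq_le_offDirectionEnergy DRic hγ)
      (sq_le_offDirectionEnergy DRic (ne_of_mem_erase ha))).trans ?_
    have hcard : (#(univ.erase o) : ℝ) ≤ Fintype.card ι := Nat.cast_le.mpr (card_le_univ _)
    exact mul_le_mul_of_nonneg_right (pow_le_pow_left₀ (Nat.cast_nonneg _) hcard 2) (by linarith)
  rw [first_last_eq_ricci_add_sum o hbianchi htrace]
  calc _ ≤ 2 * (DRic β γ o ^ 2 + (∑ a ∈ univ.erase o, (DR a β a o γ + DR a β o γ a)) ^ 2) :=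
        add_sq_le
    _ ≤ 2 * (offDirectionEnergy DR DRic o
          + (Fintype.card ι : ℝ) ^ 2 * (4 * offDirectionEnergy DR DRic o)) := by
        gcongr
        exact sq_ricci_le_offDirectionEnergy o β γ o
    _ = _ := by ring

lemma four_mul_offDirectionEnergy_le :
    4 * offDirectionEnergy DR DRic o
      ≤ (8 * (Fintype.card ι : ℝ) ^ 2 + 2) * offDirectionEnergy DR DRic o := by
  have hcard : (1 : ℝ) ≤ Fintype.card ι := by exact_mod_cast Fintype.card_pos_iff.mpr ⟨o⟩
  gcongr
  · exact offDirectionEnergy_nonneg DR DRic o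
  · nlinarith

lemma sq_middle_first_le
    (hskew : ∀ i j k l p, DR i j k l p = -DR i j l k p)
    (hpair : ∀ i j k l p, DR i j k l p = DR k l i j p)
    (hbianchi : ∀ i j k l p, DR i j k l p + DR i j l p k + DR i j p k l = 0)
    (htrace : ∀ i j p, DRic i j p = ∑ a, DR a i j a p) (i j l : ι) :
    DR i j o l o ^ 2 ≤ (8 * (Fintype.card ι : ℝ) ^ 2 + 2) * offDirectionEnergy DR DRic o := by
  rw [hpair]
  by_cases hi : i = o
  · rw [hi, hskew, neg_sq]
    exact sq_first_last_le o hskew hbianchi htrace l j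
  by_cases hj : j = o
  · rw [hj]
    exact sq_first_last_le o hskew hbianchi htrace l i
  calc _ ≤ 4 * offDirectionEnergy DR DRic o := sq_le_four_mul_offDirectionEnergy o hbianchi hi hj
    _ ≤ _ := four_mul_offDirectionEnergy_le o

lemma sq_le_const_mul_offDirectionEnergy
    (hskew : ∀ i j k l p, DR i j k l p = -DR i j l k p)
    (hpair : ∀ i j k l p, DR i j k l p = DR k l i j p)
    (hbianchi : ∀ i j k l p, DR i j k l p + DR i j l p k + DR i j p k l = 0)
    (htrace : ∀ i j p, DRic i j p = ∑ a, DR a i j a p) (i j k l : ι) :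
    DR i j k l o ^ 2 ≤ (8 * (Fintype.card ι : ℝ) ^ 2 + 2) * offDirectionEnergy DR DRic o := by
  by_cases hk : k = o
  · rw [hk]
    exact sq_middle_first_le o hskew hpair hbianchi htrace i j l
  by_cases hl : l = o
  · rw [hl, hskew, neg_sq]
    exact sq_middle_first_le o hskew hpair hbianchi htrace i j k
  calc _ ≤ 4 * offDirectionEnergy DR DRic o := sq_le_four_mul_offDirectionEnergy o hbianchi hk hl
    _ ≤ _ := four_mul_offDirectionEnergy_le o

theorem sum_sq_le_const_mul_offDirectionEnergy
    (hskew : ∀ i j k l p, DR i j k l p = -DR i j l k p)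
    (hpair : ∀ i j k l p, DR i j k l p = DR k l i j p)
    (hbianchi : ∀ i j k l p, DR i j k l p + DR i j l p k + DR i j p k l = 0)
    (htrace : ∀ i j p, DRic i j p = ∑ a, DR a i j a p) :
    ∑ i, ∑ j, ∑ k, ∑ l, DR i j k l o ^ 2
      ≤ (Fintype.card ι : ℝ) ^ 4 * (8 * (Fintype.card ι : ℝ) ^ 2 + 2)
        * offDirectionEnergy DR DRic o := by
  calc _ ≤ ∑ _i : ι, ∑ _j : ι, ∑ _k : ι, ∑ _l : ι,
          (8 * (Fintype.card ι : ℝ) ^ 2 + 2) * offDirectionEnergy DR DRic o := by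
        gcongr with i _ j _ k _ l _
        exact sq_le_const_mul_offDirectionEnergy o hskew hpair hbianchi htrace i j k l
    _ = _ := by
      simp only [sum_const, card_univ, nsmul_eq_mul]
      ring

end CurvatureDerivative

/-- in a normal frame with distinguished direction `e₁` (index `0`), the
derivatives of curvature in the direction `e₁` are controlled by the derivatives in the
other directions together with the derivatives of the Ricci tensor:
`Σ_{ijkl} (R_{ijkl,1})² ≤ C(n) Ξ` where
`Ξ = Σ_{ijkl} Σ_{p≥2} (R_{ijkl,p})² + Σ_{ijp} (Ric_{ij,p})²`.
Hypotheses: curvature symmetries of `∇Rm`, the second Bianchi identity and the trace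
relation `Ric_{ij,p} = Σ_a R_{aija,p}`. -/
theorem curvature_derivative_first_direction_bound :
    ∀ n : ℕ, ∃ C : ℝ, 0 < C ∧
    ∀ (DR : Fin (n+1) → Fin (n+1) → Fin (n+1) → Fin (n+1) → Fin (n+1) → ℝ)
      (DRic : Fin (n+1) → Fin (n+1) → Fin (n+1) → ℝ),
      (∀ i j k l p, DR i j k l p = -DR j i k l p) →
      (∀ i j k l p, DR i j k l p = -DR i j l k p) →
      (∀ i j k l p, DR i j k l p = DR k l i j p) →
      -- second Bianchi identity: R_{ijkl,p} + R_{ijlp,k} + R_{ijpk,l} = 0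
      (∀ i j k l p, DR i j k l p + DR i j l p k + DR i j p k l = 0) →
      -- trace relation: Ric_{ij,p} = Σ_a R_{aija,p}
      (∀ i j p, DRic i j p = ∑ a, DR a i j a p) →
      (∑ i, ∑ j, ∑ k, ∑ l, (DR i j k l 0)^2) ≤
        C * ((∑ i, ∑ j, ∑ k, ∑ l, ∑ p, (if p = 0 then 0 else (DR i j k l p)^2))
              + ∑ i, ∑ j, ∑ p, (DRic i j p)^2) := by
  intro n
  refine ⟨((n : ℝ) + 1) ^ 4 * (8 * ((n : ℝ) + 1) ^ 2 + 2), by positivity,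
    fun DR DRic _ hskew hpair hbianchi htrace => ?_⟩
  simpa [offDirectionEnergy] using
    sum_sq_le_const_mul_offDirectionEnergy 0 hskew hpair hbianchi htrace
end

section
/- Let S ⊆ ℝᵐ (or a metric measure space with H^k) be a set, and suppose for every ε > 0 there is a countable family of k-rectifiable closed subsets R_ε(B_r(y_j)) ⊆ S ∩ B_r(y_j), over a countable dense set of centers y_j and rational radii r, with H^k(S ∩ B_r(y_j) \ R_ε(B_r(y_j))) < ε r^k. If ε < ε_m, where ε_m is the dimensional density constant, then S is k-rectifiable up to an H^k-null set; i.e., H^k(S \ R) = 0 where R is the union of all the sets R_ε(B_r(y_j)). -/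
/-!
Let `A = S \ R`. A subset `E ⊆ A` of finite diameter lies, for every rational `q > diam E`, in a
ball `B_q(y_j)` (the centres are dense) while missing `R_ε(B_q(y_j))`, hence
`H^k(E) ≤ ε q^k`, and letting `q ↓ diam E` gives `H^k(E) ≤ ε (diam E)^k`. Feeding this into the
definition of the (unnormalised) Hausdorff measure gives `H^k(A') ≤ ε H^k(A')` for `A' ⊆ A`, so
every piece of `A` of finite measure is null once `ε < 1`. The pieces `A ∩ B_1(y_j)` have finite
measure and cover `A`.
-/

open MeasureTheory Metric

/-- A set is `k`-rectifiable (up to an `H^k`-null set) if, away from an `H^k`-null set,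
it is covered by countably many Lipschitz images of `ℝ^k`. -/
def IsRectifiableSet (k m : ℕ) (S : Set (EuclideanSpace ℝ (Fin m))) : Prop :=
  ∃ (N : Set (EuclideanSpace ℝ (Fin m)))
    (f : ℕ → EuclideanSpace ℝ (Fin k) → EuclideanSpace ℝ (Fin m)) (L : ℕ → NNReal),
    Measure.hausdorffMeasure (k:ℝ) N = 0 ∧
    (∀ i, LipschitzWith (L i) (f i)) ∧
    S ⊆ N ∪ ⋃ i, Set.range (f i)

open Set Filter Topology ENNReal

theorem IsRectifiableSet.of_countable {k m : ℕ} {ι : Sort*} [Countable ι]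
    {S N : Set (EuclideanSpace ℝ (Fin m))}
    {f : ι → EuclideanSpace ℝ (Fin k) → EuclideanSpace ℝ (Fin m)} {L : ι → NNReal}
    (hN : μH[k] N = 0) (hf : ∀ i, LipschitzWith (L i) (f i))
    (hS : S ⊆ N ∪ ⋃ i, range (f i)) : IsRectifiableSet k m S := by
  cases isEmpty_or_nonempty ι
  · exact ⟨N, fun _ _ => 0, fun _ => 0, hN, fun _ => LipschitzWith.const 0,
      hS.trans (union_subset_union_right N (by simp))⟩
  · obtain ⟨e, he⟩ := exists_surjective_nat ι
    exact ⟨N, f ∘ e, L ∘ e, hN, fun n => hf (e n),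
      he.iUnion_comp (fun i => range (f i)) ▸ hS⟩

theorem IsRectifiableSet.iUnion {k m : ℕ} {ι : Sort*} [Countable ι]
    {S : ι → Set (EuclideanSpace ℝ (Fin m))} (h : ∀ i, IsRectifiableSet k m (S i)) :
    IsRectifiableSet k m (⋃ i, S i) := by
  choose N f L hN hf hS using h
  refine .of_countable (f := fun p : PProd ι ℕ => f p.1 p.2) (measure_iUnion_null hN)
    (fun p => hf p.1 p.2) (iUnion_subset fun i => (hS i).trans ?_)
  exact union_subset_union (subset_iUnion N i)
    (iUnion_subset fun n => subset_iUnion (fun p : PProd ι ℕ => range (f p.1 p.2)) ⟨i, n⟩)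

theorem Metric.exists_subset_ball_of_ediam_lt {X ι : Type*} [PseudoMetricSpace X] {y : ι → X}
    {E : Set X} (hy : E ⊆ closure (range y)) (hne : E.Nonempty) {r : ℝ}
    (hr : ediam E < ENNReal.ofReal r) : ∃ j, E ⊆ ball (y j) r := by
  obtain ⟨x, hx⟩ := hne
  have hD : (ediam E).toReal < r := toReal_lt_of_lt_ofReal hr
  obtain ⟨j, hj⟩ := mem_closure_range_iff.1 (hy hx) _ (sub_pos.2 hD)
  refine ⟨j, fun z hz => mem_ball.2 ?_⟩
  have hzx : dist z x ≤ (ediam E).toReal := by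
    rw [dist_edist]
    exact toReal_mono hr.ne_top (edist_le_ediam_of_mem hz hx)
  linarith [dist_triangle z x (y j)]

theorem measure_le_ofReal_mul_ediam_pow {X ι : Type*} [PseudoMetricSpace X] [MeasurableSpace X]
    (μ : Measure X) {y : ι → X} {E : Set X} (hy : E ⊆ closure (range y)) {ε : ℝ} {k : ℕ}
    (h : ∀ j (q : ℚ), 0 < q → μ (E ∩ ball (y j) q) ≤ ENNReal.ofReal (ε * q ^ k))
    (hE : ediam E ≠ ∞) : μ E ≤ ENNReal.ofReal ε * ediam E ^ k := by
  rcases E.eq_empty_or_nonempty with rfl | hne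
  · simp
  have hbound : ∀ r ∈ Ioi (ediam E), μ E ≤ ENNReal.ofReal ε * r ^ k := by
    intro r hr
    obtain ⟨q, -, hEq, hqr⟩ := ENNReal.lt_iff_exists_rat_btwn.1 hr
    obtain ⟨j, hj⟩ := exists_subset_ball_of_ediam_lt hy hne hEq
    have hq : 0 < q := by simpa using zero_le.trans_lt hEq
    calc μ E = μ (E ∩ ball (y j) q) := by rw [inter_eq_left.2 hj]
      _ ≤ ENNReal.ofReal (ε * q ^ k) := h j q hq
      _ = ENNReal.ofReal ε * ENNReal.ofReal q ^ k := by
        rw [ENNReal.ofReal_mul' (by positivity), ENNReal.ofReal_pow (by positivity)]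
      _ ≤ ENNReal.ofReal ε * r ^ k := by gcongr; exact hqr.le
  have : (𝓝[>] ediam E).NeBot := nhdsGT_neBot_of_exists_gt ⟨∞, hE.lt_top⟩
  have hcont : Continuous fun r : ℝ≥0∞ => ENNReal.ofReal ε * r ^ k :=
    (ENNReal.continuous_const_mul ofReal_ne_top).comp (ENNReal.continuous_pow k)
  exact ge_of_tendsto ((hcont.tendsto _).mono_left nhdsWithin_le_nhds)
    (eventually_nhdsWithin_of_forall hbound)

theorem hausdorffMeasure_eq_zero_of_le_mul_ediam_rpow {X : Type*} [EMetricSpace X]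
    [MeasurableSpace X] [BorelSpace X] {d : ℝ} (hd : 0 ≤ d) {c : ℝ≥0∞} (hc : c < 1) {A : Set X}
    (hA : μH[d] A ≠ ∞) (h : ∀ E ⊆ A, ediam E ≠ ∞ → μH[d] E ≤ c * ediam E ^ d) :
    μH[d] A = 0 := by
  -- `mkMetric_smul` needs a nonzero constant, so enlarge `c` harmlessly.
  set c' := max c 2⁻¹
  have hc' : c' < 1 := max_lt hc (by norm_num)
  have hc'0 : c' ≠ 0 := (lt_max_of_lt_right (by norm_num)).ne'
  have hrestrict : ∀ s, ediam s ≤ 1 →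
      OuterMeasure.restrict A μH[d].toOuterMeasure s ≤ (c' • fun r => r ^ d) (ediam s) := by
    intro s hs
    have hsA : ediam (s ∩ A) ≤ ediam s := ediam_mono inter_subset_left
    rw [OuterMeasure.restrict_apply]
    calc μH[d] (s ∩ A) ≤ c * ediam (s ∩ A) ^ d :=
          h _ inter_subset_right (ne_top_of_le_ne_top one_ne_top (hsA.trans hs))
      _ ≤ c' * ediam s ^ d := by gcongr; exact le_max_left _ _
  have hle := OuterMeasure.le_mkMetric _ _ 1 one_pos hrestrict A
  rw [OuterMeasure.restrict_apply, inter_self, OuterMeasure.mkMetric_smul _ hc'.ne_top hc'0,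
    ← Measure.mkMetric_toOuterMeasure] at hle
  by_contra h0
  exact (hle.trans_lt ((ENNReal.mul_lt_mul_left h0 hA hc').trans_eq (one_mul _))).false

/-- if for some `ε` below the dimensional density constant `ε_m` a set `S`
admits, around a countable dense set of centers and rational radii, closed `k`-rectifiable
subsets `R_ε(B_r(y_j)) ⊆ S ∩ B_r(y_j)` with `H^k(S ∩ B_r(y_j) \ R_ε(B_r(y_j))) < ε r^k`,
then `S` is `k`-rectifiable up to an `H^k`-null set. -/
theorem rectifiable_from_local_approximations (k m : ℕ) :
    ∃ εm : ℝ, 0 < εm ∧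
    ∀ (S : Set (EuclideanSpace ℝ (Fin m))) (ε : ℝ), 0 < ε → ε < εm →
    (∃ y : ℕ → EuclideanSpace ℝ (Fin m),
      (∀ j, y j ∈ closure S) ∧ S ⊆ closure (Set.range y) ∧
      ∀ (j : ℕ) (q : ℚ), 0 < q →
        ∃ R : Set (EuclideanSpace ℝ (Fin m)),
          IsClosed R ∧ R ⊆ S ∩ ball (y j) q ∧ IsRectifiableSet k m R ∧
          Measure.hausdorffMeasure (k:ℝ) ((S ∩ ball (y j) q) \ R)
            < ENNReal.ofReal (ε * (q:ℝ)^k)) →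
    ∃ R : Set (EuclideanSpace ℝ (Fin m)),
      R ⊆ S ∧ IsRectifiableSet k m R ∧
      Measure.hausdorffMeasure (k:ℝ) (S \ R) = 0 := by
  refine ⟨1, one_pos, ?_⟩
  rintro S ε - hε1 ⟨y, -, hy, h⟩
  choose R _ hRS hR hR_excess using h
  set A := S \ ⋃ (j) (q) (hq), R j q hq
  refine ⟨⋃ (j) (q) (hq), R j q hq, iUnion₂_subset fun j q => iUnion_subset fun hq =>
      fun x hx => (hRS j q hq hx).1,
    .iUnion fun j => .iUnion fun q => .iUnion fun hq => hR j q hq, ?_⟩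
  have hA_ball : ∀ j (q : ℚ) hq, A ∩ ball (y j) q ⊆ (S ∩ ball (y j) q) \ R j q hq :=
    fun j q hq x ⟨⟨hxS, hxR⟩, hxB⟩ =>
      ⟨⟨hxS, hxB⟩, fun hx => hxR (mem_iUnion₂.2 ⟨j, q, mem_iUnion.2 ⟨hq, hx⟩⟩)⟩
  have hA_diam : ∀ E ⊆ A, ediam E ≠ ∞ →
      μH[k] E ≤ ENNReal.ofReal ε * ediam E ^ (k : ℝ) := fun E hE hE_fin => by
    rw [rpow_natCast]
    refine measure_le_ofReal_mul_ediam_pow _ (fun x hx => hy (hE hx).1) (fun j q hq => ?_)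
      hE_fin
    exact (measure_mono ((inter_subset_inter_left _ hE).trans (hA_ball j q hq))).trans
      (hR_excess j q hq).le
  have hA_ball_null : ∀ j, μH[k] (A ∩ ball (y j) (1 : ℚ)) = 0 := fun j =>
    hausdorffMeasure_eq_zero_of_le_mul_ediam_rpow k.cast_nonneg (ofReal_lt_one.2 hε1)
      ((measure_mono (hA_ball j 1 one_pos)).trans_lt
        ((hR_excess j 1 one_pos).trans ofReal_lt_top)).ne
      (fun E hE => hA_diam E (hE.trans inter_subset_left))
  refine measure_mono_null (fun x hx => ?_) (measure_iUnion_null hA_ball_null)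
  obtain ⟨j, hj⟩ := mem_closure_range_iff.1 (hy hx.1) 1 one_pos
  exact mem_iUnion.2 ⟨j, hx, by simpa using hj⟩
end
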